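/- Let n ≥ 1, 1 ≤ k ≤ n, and let λ : Fin n → ℝ satisfy |λ i| = 1 for exactly k indices i and |λ i| < 1 for all remaining indices (this is the eigenvalue profile of the diffusion operator on data with k well-separated connected clusters). Then lim_{t → ∞} S(λ, t) = log k. -/

import Mathlib

open Real Filter

/-- Diffusion spectral entropy of an eigenvalue list `lam` at diffusion time `t`:
`S(λ, t) = -∑ i, α_{i,t} log α_{i,t}` where `α_{i,t} = |λ_i|^t / ∑_j |λ_j|^t`. -/
noncomputable def diffusionSpectralEntropy {ι : Type*} [Fintype ι] (lam : ι → ℝ) (t : ℝ) : ℝ :=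
  -∑ i, (|lam i| ^ t / ∑ j, |lam j| ^ t) * Real.log (|lam i| ^ t / ∑ j, |lam j| ^ t)

/-!
As `t → ∞`, `|λ_i|^t` tends to `1` on the `k` indices with `|λ_i| = 1` and to `0` elsewhere, so the
normalised weights `α_{i,t}` tend to the uniform distribution on those `k` indices. The entropy
`∑ negMulLog α_i` is continuous in the weights as long as their total stays away from `0`, hence
tends to the entropy `log k` of the uniform distribution.
-/

open Finset

section Entropy

variable {ι : Type*} [Fintype ι]

lemma diffusionSpectralEntropy_eq_sum_negMulLog (lam : ι → ℝ) (t : ℝ) :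
    diffusionSpectralEntropy lam t = ∑ i, negMulLog (|lam i| ^ t / ∑ j, |lam j| ^ t) := by
  simp only [diffusionSpectralEntropy, negMulLog_eq_neg, sum_neg_distrib]

lemma tendsto_sum_negMulLog_div_sum {α : Type*} {l : Filter α} {f : α → ι → ℝ} {w : ι → ℝ}
    (hf : ∀ i, Tendsto (f · i) l (nhds (w i))) (hw : ∑ j, w j ≠ 0) :
    Tendsto (fun a => ∑ i, negMulLog (f a i / ∑ j, f a j)) l
      (nhds (∑ i, negMulLog (w i / ∑ j, w j))) := by
  have hsum : Tendsto (fun a => ∑ j, f a j) l (nhds (∑ j, w j)) :=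
    tendsto_finsetSum _ fun j _ => hf j
  exact tendsto_finsetSum _ fun i _ =>
    (continuous_negMulLog.tendsto _).comp ((hf i).div hsum hw)

lemma sum_negMulLog_indicator_div_card [DecidableEq ι] (s : Finset ι) :
    ∑ i, negMulLog ((if i ∈ s then 1 else 0) / #s) = log #s := by
  simp only [apply_ite (fun x : ℝ => negMulLog (x / #s)), zero_div, negMulLog_zero,
    sum_ite_mem, univ_inter, sum_const, nsmul_eq_mul]
  rw [negMulLog, one_div, log_inv]
  rcases eq_or_ne (#s : ℝ) 0 with hs | hs
  · simp [hs]
  · field_simp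

end Entropy

lemma tendsto_rpow_atTop_of_le_one {x : ℝ} (hx₀ : 0 ≤ x) (hx₁ : x ≤ 1) :
    Tendsto (fun t : ℝ => x ^ t) atTop (nhds (if x = 1 then 1 else 0)) := by
  split_ifs with h
  · simp [h]
  · exact tendsto_rpow_atTop_of_base_lt_one x (by linarith) (lt_of_le_of_ne hx₁ h)

theorem dse_tendsto_log_k_of_k_clusters_general {n k : ℕ} (hk : 1 ≤ k)
    (lam : Fin n → ℝ)
    (hcard : (Finset.univ.filter fun i => |lam i| = 1).card = k)
    (hlt : ∀ i, |lam i| ≠ 1 → |lam i| < 1) :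
    Tendsto (fun t => diffusionSpectralEntropy lam t) atTop (nhds (Real.log k)) := by
  set s := univ.filter fun i => |lam i| = 1
  have hpow : ∀ i, Tendsto (fun t : ℝ => |lam i| ^ t) atTop
      (nhds (if i ∈ s then 1 else 0)) := fun i => by
    simpa [s] using tendsto_rpow_atTop_of_le_one (abs_nonneg (lam i))
      ((em (|lam i| = 1)).elim le_of_eq fun h => (hlt i h).le)
  have hs : ∑ j, (if j ∈ s then (1 : ℝ) else 0) = #s := by simp
  have hlim := tendsto_sum_negMulLog_div_sum hpow (by rw [hs, hcard]; positivity)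
  rw [hs, sum_negMulLog_indicator_div_card, hcard] at hlim
  simpa only [diffusionSpectralEntropy_eq_sum_negMulLog] using hlim

/-- For the eigenvalue profile of a diffusion operator on data with `k` well-separated connected
clusters (exactly `k` eigenvalues of modulus 1, all remaining eigenvalues of modulus strictly
less than 1), the diffusion spectral entropy tends to `log k` as `t → ∞`. -/
theorem dse_tendsto_log_k_of_k_clusters {n k : ℕ} (hn : 1 ≤ n) (hk : 1 ≤ k) (hkn : k ≤ n)
    (lam : Fin n → ℝ)
    (hcard : (Finset.univ.filter fun i => |lam i| = 1).card = k)
    (hlt : ∀ i, |lam i| ≠ 1 → |lam i| < 1) :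
    Tendsto (fun t => diffusionSpectralEntropy lam t) atTop (nhds (Real.log k)) :=
  dse_tendsto_log_k_of_k_clusters_general hk lam hcard hlt
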